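/- An automorphism of a smooth hyperelliptic curve of genus g has order at most 4g+4. -/
import Mathlib


/-- An automorphism of a smooth hyperelliptic curve of genus `g` has order at most
`4g+4`: abstractly, if `Aut(C) = G` is finite, `φ : G → Q` is the induced action on
`ℙ¹` with kernel `{1, γ}` generated by the hyperelliptic involution `γ` (of order
dividing 2), and every image `φ(α)` has order at most `2g+2`, then every `α ∈ G` has
order at most `4g+4`. -/
theorem hyperelliptic_automorphism_order_le (g : ℕ) (hg : 2 ≤ g)
    (G : Type) [Group G] [Finite G] (Q : Type) [Group Q]
    (φ : G →* Q) (γ : G) (hγ : γ ^ 2 = 1)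
    (hker : ∀ x : G, φ x = 1 ↔ x = 1 ∨ x = γ)
    (hord : ∀ x : G, orderOf (φ x) ≤ 2 * g + 2) :
    ∀ α : G, orderOf α ≤ 4 * g + 4 := by
  intro α
  set m := orderOf (φ α) with hm
  have hmpos : 0 < m := by
    have : IsOfFinOrder (φ α) := MonoidHom.isOfFinOrder φ (isOfFinOrder_of_finite α)
    exact this.orderOf_pos
  have h1 : φ (α ^ m) = 1 := by
    rw [map_pow]; exact pow_orderOf_eq_one (φ α)
  have h2 : α ^ (2 * m) = 1 := by
    rcases (hker (α ^ m)).mp h1 with h | h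
    · rw [two_mul, pow_add, h, one_mul]
    · rw [mul_comm, pow_mul, h, hγ]
  have hdvd : orderOf α ∣ 2 * m := orderOf_dvd_of_pow_eq_one h2
  calc orderOf α ≤ 2 * m := Nat.le_of_dvd (by omega) hdvd
    _ ≤ 2 * (2 * g + 2) := by
        have := hord α; omega
    _ = 4 * g + 4 := by ring
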